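/- Polyak-stepsize contraction for convex g₊ with damped stepsize: let g₊ = max{g, 0} with g convex and M-Lipschitz on closed convex X, S = {x ∈ X : g₊(x) = 0} nonempty, and suppose ν'·dist(x, S) ≤ g₊(x) for all x ∈ X with 0 < ν' ≤ M. If x⁺ = proj_X(x − η ζ) with ζ ∈ ∂g₊(x), ζ ≠ 0, and η = ν' g₊(x)/(2M‖ζ‖²), then dist²(x⁺, S) ≤ (1 − 3ν'³/(4M³))·dist²(x, S). If ζ = 0, then x ∈ S. -/

import Mathlib

/-!
For every `s ∈ S`, the projection onto `X` does not increase the distance to `s`, and the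
subgradient inequality at `s` turns one subgradient step into
`‖x⁺ - s‖² ≤ ‖x - s‖² - (2ηg₊(x) - η²‖ζ‖²)`. Taking the infimum over `s` removes the need for a
nearest point of `S`; with the damped stepsize the gain `2ηg₊(x) - η²‖ζ‖²` is at least
`(3ν'³/(4M³)) dist²(x, S)` by the error bound and `‖ζ‖ ≤ M`.
-/

open Metric
open scoped InnerProductSpace

section InnerProductSpace

variable {E : Type*} [NormedAddCommGroup E] [InnerProductSpace ℝ E]

theorem norm_sub_le_of_forall_norm_sub_le {X : Set E} (hX : Convex ℝ X) {u p w : E}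
    (hp : p ∈ X) (hmin : ∀ y ∈ X, ‖p - u‖ ≤ ‖y - u‖) (hw : w ∈ X) : ‖p - w‖ ≤ ‖u - w‖ := by
  have : Nonempty X := ⟨⟨p, hp⟩⟩
  have hbdd : BddBelow (Set.range fun y : X => ‖u - y‖) :=
    ⟨0, by rintro _ ⟨y, rfl⟩; exact norm_nonneg _⟩
  have hinf : ‖u - p‖ = ⨅ y : X, ‖u - y‖ :=
    le_antisymm (le_ciInf fun y => by simpa only [norm_sub_rev u] using hmin y y.2)
      (ciInf_le hbdd ⟨p, hp⟩)
  have hvi : ⟪u - p, w - p⟫_ℝ ≤ 0 := (norm_eq_iInf_iff_real_inner_le_zero hX hp).mp hinf w hw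
  have hexpand : ‖u - w‖ ^ 2 = ‖u - p‖ ^ 2 - 2 * ⟪u - p, w - p⟫_ℝ + ‖w - p‖ ^ 2 := by
    rw [← norm_sub_sq_real, sub_sub_sub_cancel_right]
  rw [norm_sub_rev p w, ← sq_le_sq₀ (norm_nonneg _) (norm_nonneg _)]
  nlinarith [sq_nonneg ‖u - p‖]

theorem norm_sub_smul_sub_sq_le {x s ζ : E} {a η : ℝ} (ha : a ≤ ⟪ζ, x - s⟫_ℝ) (hη : 0 ≤ η) :
    ‖x - η • ζ - s‖ ^ 2 ≤ ‖x - s‖ ^ 2 - 2 * η * a + η ^ 2 * ‖ζ‖ ^ 2 := by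
  have hexpand : ‖x - η • ζ - s‖ ^ 2 = ‖x - s‖ ^ 2 - 2 * η * ⟪ζ, x - s⟫_ℝ + η ^ 2 * ‖ζ‖ ^ 2 := by
    rw [sub_right_comm, norm_sub_sq_real, real_inner_smul_right, real_inner_comm, norm_smul,
      mul_pow, Real.norm_eq_abs, sq_abs]
    ring
  nlinarith

end InnerProductSpace

theorem le_infDist_sq {α : Type*} [PseudoMetricSpace α] {s : Set α} {x : α} {a : ℝ}
    (hs : s.Nonempty) (h : ∀ y ∈ s, a ≤ dist x y ^ 2) : a ≤ infDist x s ^ 2 :=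
  (Real.sqrt_le_iff.mp ((le_infDist hs).mpr fun y hy =>
    Real.sqrt_le_iff.mpr ⟨dist_nonneg, h y hy⟩)).2

theorem damped_polyak_gain {ν M n G D : ℝ} (hν : 0 < ν) (hνM : ν ≤ M) (hn : 0 < n) (hnM : n ≤ M)
    (hD : 0 ≤ D) (hDG : ν * D ≤ G) :
    3 * ν ^ 3 / (4 * M ^ 3) * D ^ 2 ≤
      2 * (ν * G / (2 * M * n ^ 2)) * G - (ν * G / (2 * M * n ^ 2)) ^ 2 * n ^ 2 := by
  have hM : 0 < M := hν.trans_le hνM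
  have hG : ν ^ 2 * D ^ 2 ≤ G ^ 2 := by rw [← mul_pow]; gcongr
  calc 3 * ν ^ 3 / (4 * M ^ 3) * D ^ 2 = ν * (ν ^ 2 * D ^ 2) / M ^ 3 * (3 / 4) := by ring
    _ ≤ ν * G ^ 2 / (M * n ^ 2) * (1 - ν / (4 * M)) := by
        gcongr ?_ * ?_
        · rw [show M ^ 3 = M * M ^ 2 by ring]; gcongr
        · rw [le_sub_comm, div_le_iff₀ (by positivity)]; linarith
    _ = _ := by field_simp; ring

theorem damped_polyak_step_contracts_distance_convex_general
    {d : ℕ} (X : Set (EuclideanSpace ℝ (Fin d)))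
    (hXconv : Convex ℝ X)
    (g : EuclideanSpace ℝ (Fin d) → ℝ) (M ν' : ℝ)
    -- subdifferential of `g₊ = max{g, 0}` (convex subgradient inequality, `M`-bounded)
    (subgp : EuclideanSpace ℝ (Fin d) → Set (EuclideanSpace ℝ (Fin d)))
    (hsubgp : ∀ x' ∈ X, ∀ ζ ∈ subgp x', ∀ z ∈ X,
      max (g z) 0 ≥ max (g x') 0 + (inner ℝ ζ (z - x') : ℝ))
    (hMgp : ∀ x ∈ X, ∀ ζ ∈ subgp x, ‖ζ‖ ≤ M)
    (S : Set (EuclideanSpace ℝ (Fin d))) (hSdef : S = {x ∈ X | max (g x) 0 = 0})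
    (hSne : S.Nonempty)
    (hν1 : 0 < ν') (hν2 : ν' ≤ M)
    -- global linear error bound
    (heb : ∀ x ∈ X, ν' * Metric.infDist x S ≤ max (g x) 0)
    (x : EuclideanSpace ℝ (Fin d)) (hx : x ∈ X)
    (ζ : EuclideanSpace ℝ (Fin d)) (hζ : ζ ∈ subgp x) :
    (∀ xp : EuclideanSpace ℝ (Fin d), ζ ≠ 0 → xp ∈ X →
      -- `xp = proj_X (x − η ζ)` with `η = ν' g₊(x)/(2M‖ζ‖²)`
      (∀ y ∈ X, ‖xp - (x - (ν' * max (g x) 0 / (2 * M * ‖ζ‖ ^ 2)) • ζ)‖ ≤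
        ‖y - (x - (ν' * max (g x) 0 / (2 * M * ‖ζ‖ ^ 2)) • ζ)‖) →
      Metric.infDist xp S ^ 2 ≤ (1 - 3 * ν' ^ 3 / (4 * M ^ 3)) * Metric.infDist x S ^ 2) ∧
    (ζ = 0 → x ∈ S) := by
  have hgap : ∀ s ∈ S, max (g x) 0 ≤ ⟪ζ, x - s⟫_ℝ := fun s hs => by
    rw [hSdef] at hs
    have := hsubgp x hx ζ hζ s hs.1
    rw [hs.2, ← neg_sub x s, inner_neg_right] at this
    linarith
  refine ⟨fun xp hζ0 hxp hproj => ?_, fun hζ0 => ?_⟩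
  · set G := max (g x) 0
    set η := ν' * G / (2 * M * ‖ζ‖ ^ 2)
    have hM : 0 < M := hν1.trans_le hν2
    have hη : 0 ≤ η := by positivity
    have hstep : ∀ s ∈ S, infDist xp S ^ 2 + (2 * η * G - η ^ 2 * ‖ζ‖ ^ 2) ≤ dist x s ^ 2 := by
      intro s hs
      have hsX : s ∈ X := by rw [hSdef] at hs; exact hs.1
      have hproj_s := norm_sub_le_of_forall_norm_sub_le hXconv hxp hproj hsX
      have hdist := (infDist_le_dist_of_mem hs).trans_eq (dist_eq_norm xp s)
      have := pow_le_pow_left₀ infDist_nonneg (hdist.trans hproj_s) 2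
      rw [dist_eq_norm]
      linarith [norm_sub_smul_sub_sq_le (hgap s hs) hη]
    have hgain := damped_polyak_gain hν1 hν2 (norm_pos_iff.mpr hζ0) (hMgp x hx ζ hζ)
      infDist_nonneg (heb x hx)
    linarith [le_infDist_sq hSne hstep]
  · obtain ⟨s, hs⟩ := hSne
    have := hgap s hs
    rw [hζ0, inner_zero_left] at this
    rw [hSdef]
    exact ⟨hx, le_antisymm this (le_max_right _ _)⟩

/-- Lemma B.1 of the paper: Polyak-stepsize contraction for
convex `g₊ = max{g, 0}` with the damped stepsize `η = ν' g₊(x)/(2M‖ζ‖²)`: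
`dist²(x⁺, S) ≤ (1 − 3ν'³/(4M³))·dist²(x, S)`; and if `ζ = 0` then `x ∈ S`. -/
theorem damped_polyak_step_contracts_distance_convex
    {d : ℕ} (X : Set (EuclideanSpace ℝ (Fin d)))
    (hXc : IsClosed X) (hXconv : Convex ℝ X) (hXne : X.Nonempty)
    (g : EuclideanSpace ℝ (Fin d) → ℝ) (M ν' : ℝ)
    -- `g` is convex and `M`-Lipschitz on `X`
    (hgconv : ConvexOn ℝ X g)
    (hLip : ∀ y ∈ X, ∀ z ∈ X, |g y - g z| ≤ M * ‖y - z‖)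
    -- subdifferential of `g₊ = max{g, 0}` (convex subgradient inequality, `M`-bounded)
    (subgp : EuclideanSpace ℝ (Fin d) → Set (EuclideanSpace ℝ (Fin d)))
    (hsubgp : ∀ x' ∈ X, ∀ ζ ∈ subgp x', ∀ z ∈ X,
      max (g z) 0 ≥ max (g x') 0 + (inner ℝ ζ (z - x') : ℝ))
    (hMgp : ∀ x ∈ X, ∀ ζ ∈ subgp x, ‖ζ‖ ≤ M)
    (S : Set (EuclideanSpace ℝ (Fin d))) (hSdef : S = {x ∈ X | max (g x) 0 = 0})
    (hSne : S.Nonempty)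
    (hν1 : 0 < ν') (hν2 : ν' ≤ M)
    -- global linear error bound
    (heb : ∀ x ∈ X, ν' * Metric.infDist x S ≤ max (g x) 0)
    (x : EuclideanSpace ℝ (Fin d)) (hx : x ∈ X)
    (ζ : EuclideanSpace ℝ (Fin d)) (hζ : ζ ∈ subgp x) :
    (∀ xp : EuclideanSpace ℝ (Fin d), ζ ≠ 0 → xp ∈ X →
      -- `xp = proj_X (x − η ζ)` with `η = ν' g₊(x)/(2M‖ζ‖²)`
      (∀ y ∈ X, ‖xp - (x - (ν' * max (g x) 0 / (2 * M * ‖ζ‖ ^ 2)) • ζ)‖ ≤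
        ‖y - (x - (ν' * max (g x) 0 / (2 * M * ‖ζ‖ ^ 2)) • ζ)‖) →
      Metric.infDist xp S ^ 2 ≤ (1 - 3 * ν' ^ 3 / (4 * M ^ 3)) * Metric.infDist x S ^ 2) ∧
    (ζ = 0 → x ∈ S) :=
  damped_polyak_step_contracts_distance_convex_general X hXconv g M ν' subgp hsubgp hMgp S hSdef
    hSne hν1 hν2 heb x hx ζ hζ
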